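/- arXiv:1305.0089 — 4 statements merged into one kernel-verified Lean document; each statement's English description precedes it below -/
import Mathlib

section
/- For all indices 0 ≤ i, j ≤ n with i ≠ j, the biorthogonality relation ∫_α^β λ_i(x) φ_j(x) dx = 0 holds. -/
open intervalIntegral

/-- The standard hat (piecewise linear nodal) basis function `φ_i` associated with the
partition `x 0 < x 1 < ... < x n`.  The branch on `[x_{i-1}, x_i]` is omitted when `i = 0`
and the branch on `[x_i, x_{i+1}]` is omitted when `i = n`. -/
noncomputable def hatFn (x : ℕ → ℝ) (n i : ℕ) : ℝ → ℝ := fun t =>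
  if 0 < i ∧ x (i-1) ≤ t ∧ t ≤ x i then (t - x (i-1)) / (x i - x (i-1))
  else if i < n ∧ x i ≤ t ∧ t ≤ x (i+1) then (x (i+1) - t) / (x (i+1) - x i)
  else 0

/-- The biorthogonal basis function `λ_i`. -/
noncomputable def biorthFn (x : ℕ → ℝ) (n i : ℕ) : ℝ → ℝ := fun t =>
  if 0 < i ∧ x (i-1) ≤ t ∧ t < x i then (2*(t - x (i-1)) + (t - x i)) / (x i - x (i-1))
  else if i < n ∧ x i ≤ t ∧ t < x (i+1) then (2*(t - x (i+1)) + (t - x i)) / (x i - x (i+1))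
  else 0

/-- The piecewise derivative `u_h'` of the interpolant `u_h = Σ_j u(x_j) φ_j`:
on each open subinterval `(x_j, x_{j+1})` it is the constant
`(u(x_{j+1}) - u(x_j)) / (x_{j+1} - x_j)`, and it is (arbitrarily) `0` at grid points and
outside `[x 0, x n]`. -/
noncomputable def interpDeriv (x : ℕ → ℝ) (n : ℕ) (u : ℝ → ℝ) : ℝ → ℝ := fun t =>
  ∑ j ∈ Finset.range n,
    if x j < t ∧ t < x (j+1) then (u (x (j+1)) - u (x j)) / (x (j+1) - x j) else 0

/-- The recovered gradient value
`g_i = (∫_α^β u_h' λ_i dx) / (∫_α^β φ_i λ_i dx)` with `α = x 0`, `β = x n`. -/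
noncomputable def recGrad (x : ℕ → ℝ) (n : ℕ) (u : ℝ → ℝ) (i : ℕ) : ℝ :=
  (∫ t in (x 0)..(x n), interpDeriv x n u t * biorthFn x n i t) /
  (∫ t in (x 0)..(x n), hatFn x n i t * biorthFn x n i t)

/-! On a cell `(x k, x (k+1))` only `λ_k, λ_{k+1}, φ_k, φ_{k+1}` are nonzero, so for `i ≠ j` the
product `λ_i φ_j` vanishes there except for `λ_k φ_{k+1}` and `λ_{k+1} φ_k`. Up to a constant factor
these are the derivatives of `(t - a)² (t - b)` and `(t - b)² (t - a)` on `[a, b] = [x k, x (k+1)]`,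
which vanish at both endpoints. -/

open MeasureTheory Set

theorem integral_sub_mul_two_mul_sub_add_sub (a b : ℝ) :
    ∫ t in a..b, (t - a) * (2 * (t - b) + (t - a)) = 0 := by
  have hderiv : ∀ t ∈ uIcc a b, HasDerivAt (fun t => (t - a) ^ 2 * (t - b))
      ((t - a) * (2 * (t - b) + (t - a))) t := by
    intro t _
    refine ((((hasDerivAt_id' t).sub_const a).fun_pow 2).fun_mul
      ((hasDerivAt_id' t).sub_const b)).congr_deriv ?_
    ring
  rw [integral_eq_sub_of_hasDerivAt hderiv (Continuous.intervalIntegrable (by fun_prop) _ _)]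
  ring

theorem integral_biorth_left_mul_hat_right (a b : ℝ) :
    ∫ t in a..b, (2 * (t - b) + (t - a)) / (a - b) * ((t - a) / (b - a)) = 0 := by
  have h : ∀ t, (2 * (t - b) + (t - a)) / (a - b) * ((t - a) / (b - a))
      = (t - a) * (2 * (t - b) + (t - a)) / ((a - b) * (b - a)) := fun t => by
    rw [div_mul_div_comm]; ring
  simp_rw [h]
  rw [intervalIntegral.integral_div, integral_sub_mul_two_mul_sub_add_sub, zero_div]

theorem integral_biorth_right_mul_hat_left (a b : ℝ) :
    ∫ t in a..b, (2 * (t - a) + (t - b)) / (b - a) * ((b - t) / (b - a)) = 0 := by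
  have h : ∀ t, (2 * (t - a) + (t - b)) / (b - a) * ((b - t) / (b - a))
      = -((t - b) * (2 * (t - a) + (t - b))) / ((b - a) * (b - a)) := fun t => by
    rw [div_mul_div_comm]; ring
  simp_rw [h]
  rw [intervalIntegral.integral_div, intervalIntegral.integral_neg,
    intervalIntegral.integral_symm b a, integral_sub_mul_two_mul_sub_add_sub, neg_zero, neg_zero,
    zero_div]

section Partition

variable {x : ℕ → ℝ} {n i j k : ℕ} {t : ℝ}

theorem eq_of_mem_Icc_of_mem_Ioo (hx : StrictMonoOn x (Iic n)) {a : ℕ} (ha : a < n) (hk : k < n)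
    (hta : t ∈ Icc (x a) (x (a + 1))) (htk : t ∈ Ioo (x k) (x (k + 1))) : a = k := by
  have h₁ : a < k + 1 := (hx.lt_iff_lt (mem_Iic.2 ha.le) (mem_Iic.2 hk)).1 (hta.1.trans_lt htk.2)
  have h₂ : k < a + 1 := (hx.lt_iff_lt (mem_Iic.2 hk.le) (mem_Iic.2 ha)).1 (htk.1.trans_le hta.2)
  omega

theorem hatFn_eq_zero_of_mem_Ioo (hx : StrictMonoOn x (Iic n)) (hk : k < n) (hi : i ≤ n)
    (hik : i ≠ k) (hik' : i ≠ k + 1) (ht : t ∈ Ioo (x k) (x (k + 1))) : hatFn x n i t = 0 := by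
  rw [hatFn, if_neg, if_neg]
  · rintro ⟨hin, h₁, h₂⟩
    exact hik (eq_of_mem_Icc_of_mem_Ioo hx hin hk ⟨h₁, h₂⟩ ht)
  · rintro ⟨hi₀, h₁, h₂⟩
    have := eq_of_mem_Icc_of_mem_Ioo hx (a := i - 1) (by omega) hk
      ⟨h₁, by rwa [Nat.sub_add_cancel hi₀]⟩ ht
    omega

theorem biorthFn_eq_zero_of_mem_Ioo (hx : StrictMonoOn x (Iic n)) (hk : k < n) (hi : i ≤ n)
    (hik : i ≠ k) (hik' : i ≠ k + 1) (ht : t ∈ Ioo (x k) (x (k + 1))) :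
    biorthFn x n i t = 0 := by
  rw [biorthFn, if_neg, if_neg]
  · rintro ⟨hin, h₁, h₂⟩
    exact hik (eq_of_mem_Icc_of_mem_Ioo hx hin hk ⟨h₁, h₂.le⟩ ht)
  · rintro ⟨hi₀, h₁, h₂⟩
    have := eq_of_mem_Icc_of_mem_Ioo hx (a := i - 1) (by omega) hk
      ⟨h₁, by rw [Nat.sub_add_cancel hi₀]; exact h₂.le⟩ ht
    omega

theorem hatFn_of_mem_Ioo (hk : k < n) (ht : t ∈ Ioo (x k) (x (k + 1))) :
    hatFn x n k t = (x (k + 1) - t) / (x (k + 1) - x k) := by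
  rw [hatFn, if_neg (fun h => ht.1.not_ge h.2.2), if_pos ⟨hk, ht.1.le, ht.2.le⟩]

theorem hatFn_succ_of_mem_Ioo (ht : t ∈ Ioo (x k) (x (k + 1))) :
    hatFn x n (k + 1) t = (t - x k) / (x (k + 1) - x k) := by
  rw [hatFn, if_pos ⟨k.succ_pos, ht.1.le, ht.2.le⟩, Nat.add_sub_cancel]

theorem biorthFn_of_mem_Ioo (hk : k < n) (ht : t ∈ Ioo (x k) (x (k + 1))) :
    biorthFn x n k t = (2 * (t - x (k + 1)) + (t - x k)) / (x k - x (k + 1)) := by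
  rw [biorthFn, if_neg (fun h => ht.1.not_gt h.2.2), if_pos ⟨hk, ht.1.le, ht.2⟩]

theorem biorthFn_succ_of_mem_Ioo (ht : t ∈ Ioo (x k) (x (k + 1))) :
    biorthFn x n (k + 1) t = (2 * (t - x k) + (t - x (k + 1))) / (x (k + 1) - x k) := by
  rw [biorthFn, if_pos ⟨k.succ_pos, ht.1.le, ht.2⟩, Nat.add_sub_cancel]

theorem intervalIntegrable_and_integral_eq_zero_of_eqOn_Ioo {f g : ℝ → ℝ} {a b : ℝ} (hab : a ≤ b)
    (hg : Continuous g) (hfg : EqOn f g (Ioo a b)) (hg₀ : ∫ t in a..b, g t = 0) :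
    IntervalIntegrable f volume a b ∧ ∫ t in a..b, f t = 0 := by
  rw [← uIoo_of_le hab] at hfg
  exact ⟨(hg.intervalIntegrable a b).congr_uIoo hfg.symm, (integral_congr_uIoo hfg).trans hg₀⟩

theorem integral_cell_biorthFn_mul_hatFn (hx : StrictMonoOn x (Iic n)) (hk : k < n)
    (hi : i ≤ n) (hj : j ≤ n) (hij : i ≠ j) :
    IntervalIntegrable (fun t => biorthFn x n i t * hatFn x n j t) volume (x k) (x (k + 1)) ∧
      ∫ t in x k..x (k + 1), biorthFn x n i t * hatFn x n j t = 0 := by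
  have hle : x k ≤ x (k + 1) := (hx (mem_Iic.2 hk.le) (mem_Iic.2 hk) k.lt_succ_self).le
  by_cases hL : i = k ∧ j = k + 1
  · obtain ⟨rfl, rfl⟩ := hL
    refine intervalIntegrable_and_integral_eq_zero_of_eqOn_Ioo hle (by fun_prop)
      (fun t ht => by rw [biorthFn_of_mem_Ioo hk ht, hatFn_succ_of_mem_Ioo ht])
      (integral_biorth_left_mul_hat_right _ _)
  by_cases hR : i = k + 1 ∧ j = k
  · obtain ⟨rfl, rfl⟩ := hR
    refine intervalIntegrable_and_integral_eq_zero_of_eqOn_Ioo hle (by fun_prop)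
      (fun t ht => by rw [biorthFn_succ_of_mem_Ioo ht, hatFn_of_mem_Ioo hk ht])
      (integral_biorth_right_mul_hat_left _ _)
  refine intervalIntegrable_and_integral_eq_zero_of_eqOn_Ioo hle continuous_const
    (fun t ht => ?_) integral_zero
  by_cases hik : i = k ∨ i = k + 1
  · rw [hatFn_eq_zero_of_mem_Ioo hx hk hj (by omega) (by omega) ht, mul_zero]
  · rw [biorthFn_eq_zero_of_mem_Ioo hx hk hi (by omega) (by omega) ht, zero_mul]

end Partition

theorem biorthogonality_offdiagonal_general (n : ℕ) (x : ℕ → ℝ)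
    (hx : ∀ i < n, x i < x (i+1)) :
    ∀ i j : ℕ, i ≤ n → j ≤ n → i ≠ j →
      (∫ t in (x 0)..(x n), biorthFn x n i t * hatFn x n j t) = 0 := by
  intro i j hi hj hij
  have hcell k (hk : k < n) :=
    integral_cell_biorthFn_mul_hatFn (strictMonoOn_Iic_of_lt_succ hx) hk hi hj hij
  rw [← sum_integral_adjacent_intervals fun k hk => (hcell k hk).1]
  exact Finset.sum_eq_zero fun k hk => (hcell k (Finset.mem_range.1 hk)).2

/-- biorthogonality: for all `0 ≤ i, j ≤ n` with `i ≠ j`,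
`∫_α^β λ_i(x) φ_j(x) dx = 0`. -/
theorem biorthogonality_offdiagonal (n : ℕ) (x : ℕ → ℝ) (hn : 2 ≤ n)
    (hx : ∀ i < n, x i < x (i+1)) :
    ∀ i j : ℕ, i ≤ n → j ≤ n → i ≠ j →
      (∫ t in (x 0)..(x n), biorthFn x n i t * hatFn x n j t) = 0 :=
  biorthogonality_offdiagonal_general n x hx
end

section
/- Let u : ℝ → ℝ be any function. For every interior index 1 ≤ i ≤ n−1, one has ∫_α^β u_h'(x) λ_i(x) dx = (u(x_{i+1}) − u(x_{i−1}))/2, where u_h' is the piecewise derivative of the interpolant u_h (defined at every non-grid point, constant on each subinterval). -/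
/-!
The biorthogonal function `λ_i` vanishes outside `[x_{i-1}, x_{i+1})` and is affine on each of
the two cells `[x_{i-1}, x_i]`, `[x_i, x_{i+1}]` with mean value `1/2` there, while `u_h'` is
constant on each cell, equal to the difference quotient of `u`. Hence each cell contributes half
the increment of `u` across it, and the two contributions add up to
`(u(x_{i+1}) - u(x_{i-1})) / 2`.
-/

open intervalIntegral

open Set

lemma interpDeriv_eq_slope {x : ℕ → ℝ} {n j : ℕ} (u : ℝ → ℝ) (hx : MonotoneOn x (Iic n))
    (hj : j < n) {t : ℝ} (ht : t ∈ Ioo (x j) (x (j + 1))) :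
    interpDeriv x n u t = slope u (x j) (x (j + 1)) := by
  rw [interpDeriv, slope_def_field, Finset.sum_eq_single_of_mem j (Finset.mem_range.2 hj),
    if_pos ⟨ht.1, ht.2⟩]
  intro k hk hkj
  have hkn := Finset.mem_range.1 hk
  rw [if_neg]
  rintro ⟨hkt, htk⟩
  rcases lt_or_gt_of_ne hkj with hlt | hgt
  · have : x (k + 1) ≤ x j := hx (by simp; omega) (by simp; omega) hlt
    linarith [ht.1]
  · have : x (j + 1) ≤ x k := hx (by simp; omega) (by simp; omega) hgt
    linarith [ht.2]

lemma biorthFn_succ_of_mem_Ico {x : ℕ → ℝ} (n : ℕ) {k : ℕ} {t : ℝ}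
    (ht : t ∈ Ico (x k) (x (k + 1))) :
    biorthFn x n (k + 1) t = (2 * (t - x k) + (t - x (k + 1))) / (x (k + 1) - x k) :=
  if_pos ⟨k.succ_pos, ht.1, ht.2⟩

lemma biorthFn_of_mem_Ico {x : ℕ → ℝ} {n i : ℕ} {t : ℝ} (hi : i < n)
    (ht : t ∈ Ico (x i) (x (i + 1))) :
    biorthFn x n i t = (2 * (t - x (i + 1)) + (t - x i)) / (x i - x (i + 1)) := by
  rw [biorthFn, if_neg (fun h => (h.2.2.trans_le ht.1).false), if_pos ⟨hi, ht.1, ht.2⟩]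

lemma biorthFn_eq_zero_of_notMem_Ico {x : ℕ → ℝ} {n i : ℕ} {t : ℝ} (hl : x (i - 1) ≤ x i)
    (hr : x i ≤ x (i + 1)) (ht : t ∉ Ico (x (i - 1)) (x (i + 1))) : biorthFn x n i t = 0 := by
  rw [biorthFn, if_neg (fun h => ht ⟨h.2.1, h.2.2.trans_le hr⟩),
    if_neg (fun h => ht ⟨hl.trans h.2.1, h.2.2⟩)]

lemma interpDeriv_mul_biorthFn_succ_eqOn {x : ℕ → ℝ} {n k : ℕ} (u : ℝ → ℝ)
    (hx : MonotoneOn x (Iic n)) (hk : k < n) :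
    EqOn (fun t => interpDeriv x n u t * biorthFn x n (k + 1) t)
      (fun t => slope u (x k) (x (k + 1)) * ((2 * (t - x k) + (t - x (k + 1))) / (x (k + 1) - x k)))
      (Ioo (x k) (x (k + 1))) := fun _ ht => by
  simp only [interpDeriv_eq_slope u hx hk ht, biorthFn_succ_of_mem_Ico n (Ioo_subset_Ico_self ht)]

lemma interpDeriv_mul_biorthFn_eqOn {x : ℕ → ℝ} {n i : ℕ} (u : ℝ → ℝ)
    (hx : MonotoneOn x (Iic n)) (hi : i < n) :
    EqOn (fun t => interpDeriv x n u t * biorthFn x n i t)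
      (fun t => slope u (x (i + 1)) (x i) * ((2 * (t - x (i + 1)) + (t - x i)) / (x i - x (i + 1))))
      (Ioo (x i) (x (i + 1))) := fun _ ht => by
  simp only [interpDeriv_eq_slope u hx hi ht, biorthFn_of_mem_Ico hi (Ioo_subset_Ico_self ht),
    slope_comm u (x i)]

lemma integral_slope_mul_biorth_branch (u : ℝ → ℝ) (a b : ℝ) :
    ∫ t in a..b, slope u a b * ((2 * (t - a) + (t - b)) / (b - a)) = (u b - u a) / 2 := by
  rcases eq_or_ne a b with rfl | hab
  · simp
  have hba : b - a ≠ 0 := sub_ne_zero.2 hab.symm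
  have hlin : ∀ t, slope u a b * ((2 * (t - a) + (t - b)) / (b - a))
      = 3 * slope u a b / (b - a) * t - slope u a b * (2 * a + b) / (b - a) := fun t => by
    field_simp; ring
  simp only [hlin]
  rw [integral_sub (intervalIntegrable_id.const_mul _) intervalIntegrable_const,
    integral_const_mul, integral_id, integral_const, smul_eq_mul, slope_def_field]
  field_simp
  ring

lemma intervalIntegrable_of_eqOn_Ioo {f g : ℝ → ℝ} {a b : ℝ} (hab : a ≤ b) (hg : Continuous g)
    (h : EqOn f g (Ioo a b)) : IntervalIntegrable f MeasureTheory.volume a b :=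
  (intervalIntegrable_congr_uIoo (uIoo_of_le hab ▸ h)).2 (hg.intervalIntegrable a b)

lemma integral_eq_of_eq_zero_of_notMem_Icc {f : ℝ → ℝ} {p a c q : ℝ} (hpa : p ≤ a)
    (hcq : c ≤ q) (hf : ∀ t ∉ Icc a c, f t = 0)
    (hint : IntervalIntegrable f MeasureTheory.volume a c) :
    ∫ t in p..q, f t = ∫ t in a..c, f t := by
  have hleft : EqOn f 0 (Ioo p a) := fun t ht => hf t (fun h => ht.2.not_ge h.1)
  have hright : EqOn f 0 (Ioo c q) := fun t ht => hf t (fun h => ht.1.not_ge h.2)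
  have hint_right := intervalIntegrable_of_eqOn_Ioo hcq continuous_const hright
  rw [← integral_add_adjacent_intervals
      (intervalIntegrable_of_eqOn_Ioo hpa continuous_const hleft) (hint.trans hint_right),
    ← integral_add_adjacent_intervals hint hint_right, integral_congr_Ioo_of_le hpa hleft,
    integral_congr_Ioo_of_le hcq hright]
  simp

theorem interpDeriv_integral_against_biorth_general (n : ℕ) (x : ℕ → ℝ)
    (hx : ∀ i < n, x i < x (i+1)) (u : ℝ → ℝ) :
    ∀ i : ℕ, 1 ≤ i → i < n →
      (∫ t in (x 0)..(x n), interpDeriv x n u t * biorthFn x n i t)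
        = (u (x (i+1)) - u (x (i-1))) / 2 := by
  intro i hi hin
  obtain ⟨k, rfl⟩ : ∃ k, i = k + 1 := ⟨i - 1, by omega⟩
  have hmono : StrictMonoOn x (Iic n) := strictMonoOn_Iic_of_lt_succ hx
  have hab := hx k (by omega)
  have hbc := hx (k + 1) hin
  have hleft := interpDeriv_mul_biorthFn_succ_eqOn u hmono.monotoneOn (k := k) (by omega)
  have hright := interpDeriv_mul_biorthFn_eqOn u hmono.monotoneOn hin
  have hint_left := intervalIntegrable_of_eqOn_Ioo hab.le (by fun_prop) hleft
  have hint_right := intervalIntegrable_of_eqOn_Ioo hbc.le (by fun_prop) hright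
  have hsupp : ∀ t ∉ Icc (x k) (x (k + 1 + 1)),
      interpDeriv x n u t * biorthFn x n (k + 1) t = 0 := fun t ht => by
    rw [biorthFn_eq_zero_of_notMem_Ico hab.le hbc.le (fun h => ht (Ico_subset_Icc_self h)),
      mul_zero]
  rw [integral_eq_of_eq_zero_of_notMem_Icc (hmono.monotoneOn (by simp) (by simp; omega) k.zero_le)
      (hmono.monotoneOn (by simp; omega) (by simp) hin) hsupp (hint_left.trans hint_right),
    ← integral_add_adjacent_intervals hint_left hint_right, integral_congr_Ioo_of_le hab.le hleft,
    integral_congr_Ioo_of_le hbc.le hright, integral_symm (x (k + 1 + 1)),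
    integral_slope_mul_biorth_branch, integral_slope_mul_biorth_branch, Nat.add_sub_cancel]
  ring

/-- for any `u : ℝ → ℝ` and every interior index `1 ≤ i ≤ n-1`,
`∫_α^β u_h'(x) λ_i(x) dx = (u(x_{i+1}) - u(x_{i-1})) / 2`. -/
theorem interpDeriv_integral_against_biorth (n : ℕ) (x : ℕ → ℝ) (hn : 2 ≤ n)
    (hx : ∀ i < n, x i < x (i+1)) (u : ℝ → ℝ) :
    ∀ i : ℕ, 1 ≤ i → i < n →
      (∫ t in (x 0)..(x n), interpDeriv x n u t * biorthFn x n i t)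
        = (u (x (i+1)) - u (x (i-1))) / 2 :=
  interpDeriv_integral_against_biorth_general n x hx u
end

section
/- (Theorem 1, boundary case) Let u : ℝ → ℝ be any function. The recovered gradient values at the endpoints satisfy g_0 = (u(x_1) − u(x_0))/(x_1 − x_0) and g_n = (u(x_n) − u(x_{n−1}))/(x_n − x_{n−1}). -/
/-! At a boundary node the biorthogonal function `λ_0` (resp. `λ_n`) is supported in the single
element `[x_0, x_1]` (resp. `[x_{n-1}, x_n]`), on which `u_h'` is the constant difference quotient.
So both integrals defining the recovered gradient reduce to integrals over that element, where
`∫ λ_0 = ∫ φ_0 λ_0 = (x_1 - x_0) / 2` (and likewise at `x_n`), and the quotient is the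
difference quotient itself. -/

open intervalIntegral

open Set MeasureTheory

lemma integral_eq_integral_of_eqOn_Ioo {f g : ℝ → ℝ} {a b c d : ℝ} (hac : a ≤ c)
    (hcd : c ≤ d) (hdb : d ≤ b) (hf : EqOn f 0 (Ioc a b \ Icc c d)) (hfg : EqOn f g (Ioo c d)) :
    ∫ t in a..b, f t = ∫ t in c..d, g t := by
  have hsub : Ioo c d ⊆ Ioc a b := Ioo_subset_Ioc_self.trans (Ioc_subset_Ioc hac hdb)
  have hnull : ∀ᵐ t, t ∈ Ioc a b \ Ioo c d → f t = 0 := by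
    filter_upwards [((countable_singleton d).insert c).ae_notMem volume] with t hcd ht
    simp only [mem_insert_iff, mem_singleton_iff, not_or] at hcd
    refine hf ⟨ht.1, fun hc => ht.2 ⟨?_, ?_⟩⟩
    exacts [hc.1.lt_of_ne' hcd.1, hc.2.lt_of_ne hcd.2]
  rw [integral_of_le (hac.trans (hcd.trans hdb)), integral_of_le hcd,
    setIntegral_eq_of_subset_of_ae_sdiff_eq_zero nullMeasurableSet_Ioc hsub hnull,
    setIntegral_congr_fun measurableSet_Ioo hfg, integral_Ioc_eq_integral_Ioo]

lemma integral_quadratic (a b p q r : ℝ) :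
    ∫ t in a..b, (p * t ^ 2 + q * t + r) = p * (b ^ 3 - a ^ 3) / 3 + q * (b ^ 2 - a ^ 2) / 2
      + r * (b - a) := by
  simp (disch := exact Continuous.intervalIntegrable (by fun_prop) _ _) only
    [intervalIntegral.integral_add, intervalIntegral.integral_const_mul, integral_pow,
    intervalIntegral.integral_const, smul_eq_mul]
  rw [intervalIntegral.integral_const_mul, integral_id]
  ring

section ElementIntegrals

variable {c d : ℝ}

lemma integral_biorth_left (h : c ≠ d) :
    ∫ t in c..d, (2 * (t - d) + (t - c)) / (c - d) = (d - c) / 2 := by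
  have h' : c - d ≠ 0 := sub_ne_zero.2 h
  have hquad : ∀ t, (2 * (t - d) + (t - c)) / (c - d)
      = 0 * t ^ 2 + 3 / (c - d) * t + (-2 * d - c) / (c - d) := fun t => by ring
  simp only [hquad, integral_quadratic]
  field_simp
  ring

lemma integral_hat_mul_biorth_left (h : c ≠ d) :
    ∫ t in c..d, (d - t) / (d - c) * ((2 * (t - d) + (t - c)) / (c - d)) = (d - c) / 2 := by
  have h' : c - d ≠ 0 := sub_ne_zero.2 h
  have h'' : d - c ≠ 0 := sub_ne_zero.2 h.symm
  have hquad : ∀ t, (d - t) / (d - c) * ((2 * (t - d) + (t - c)) / (c - d))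
      = 3 / (c - d) ^ 2 * t ^ 2 + -(5 * d + c) / (c - d) ^ 2 * t
        + (2 * d ^ 2 + c * d) / (c - d) ^ 2 := fun t => by
    field_simp; ring
  simp only [hquad, integral_quadratic]
  field_simp
  ring

lemma integral_biorth_right (h : c ≠ d) :
    ∫ t in c..d, (2 * (t - c) + (t - d)) / (d - c) = (d - c) / 2 := by
  have h' : d - c ≠ 0 := sub_ne_zero.2 h.symm
  have hquad : ∀ t, (2 * (t - c) + (t - d)) / (d - c)
      = 0 * t ^ 2 + 3 / (d - c) * t + (-2 * c - d) / (d - c) := fun t => by ring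
  simp only [hquad, integral_quadratic]
  field_simp
  ring

lemma integral_hat_mul_biorth_right (h : c ≠ d) :
    ∫ t in c..d, (t - c) / (d - c) * ((2 * (t - c) + (t - d)) / (d - c)) = (d - c) / 2 := by
  have h' : d - c ≠ 0 := sub_ne_zero.2 h.symm
  have hquad : ∀ t, (t - c) / (d - c) * ((2 * (t - c) + (t - d)) / (d - c))
      = 3 / (d - c) ^ 2 * t ^ 2 + -(5 * c + d) / (d - c) ^ 2 * t
        + (2 * c ^ 2 + c * d) / (d - c) ^ 2 := fun t => by
    field_simp; ring
  simp only [hquad, integral_quadratic]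
  field_simp
  ring

end ElementIntegrals

section Partition

variable {x : ℕ → ℝ} {n m : ℕ} {t : ℝ}

lemma interpDeriv_eq_of_mem_Ioo (hx : StrictMonoOn x (Iic n)) (u : ℝ → ℝ) {j : ℕ}
    (hj : j < n) (ht : t ∈ Ioo (x j) (x (j + 1))) :
    interpDeriv x n u t = (u (x (j + 1)) - u (x j)) / (x (j + 1) - x j) := by
  rw [interpDeriv, Finset.sum_eq_single_of_mem j (Finset.mem_range.2 hj), if_pos (mem_Ioo.1 ht)]
  intro k hk hkj
  have hk : k < n := Finset.mem_range.1 hk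
  rw [if_neg]
  rintro ⟨hkt, htk⟩
  rcases hkj.lt_or_gt with hlt | hgt
  · have : x (k + 1) ≤ x j := hx.monotoneOn (mem_Iic.2 hk) (mem_Iic.2 hj.le) hlt
    linarith [ht.1]
  · have : x (j + 1) ≤ x k := hx.monotoneOn (mem_Iic.2 hj) (mem_Iic.2 hk.le) hgt
    linarith [ht.2]

lemma hatFn_zero_of_mem_Icc (hn : 0 < n) (ht : t ∈ Icc (x 0) (x 1)) :
    hatFn x n 0 t = (x 1 - t) / (x 1 - x 0) := by
  simp [hatFn, hn, ht.1, ht.2]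

lemma biorthFn_zero_of_mem_Ico (hn : 0 < n) (ht : t ∈ Ico (x 0) (x 1)) :
    biorthFn x n 0 t = (2 * (t - x 1) + (t - x 0)) / (x 0 - x 1) := by
  simp [biorthFn, hn, ht.1, ht.2]

lemma biorthFn_zero_of_le (ht : x 1 ≤ t) : biorthFn x n 0 t = 0 := by
  simp [biorthFn, not_lt.2 ht]

lemma hatFn_succ_self_of_mem_Icc (ht : t ∈ Icc (x m) (x (m + 1))) :
    hatFn x (m + 1) (m + 1) t = (t - x m) / (x (m + 1) - x m) := by
  simp [hatFn, ht.1, ht.2]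

lemma biorthFn_succ_self_of_mem_Ico (ht : t ∈ Ico (x m) (x (m + 1))) :
    biorthFn x (m + 1) (m + 1) t = (2 * (t - x m) + (t - x (m + 1))) / (x (m + 1) - x m) := by
  simp [biorthFn, ht.1, ht.2]

lemma biorthFn_succ_self_of_lt (ht : t < x m) : biorthFn x (m + 1) (m + 1) t = 0 := by
  simp [biorthFn, not_le.2 ht]

theorem recGrad_zero (hn : 0 < n) (hx : StrictMonoOn x (Iic n)) (u : ℝ → ℝ) :
    recGrad x n u 0 = (u (x 1) - u (x 0)) / (x 1 - x 0) := by
  have h01 : x 0 < x 1 := hx (mem_Iic.2 n.zero_le) (mem_Iic.2 hn) one_pos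
  have h1n : x 1 ≤ x n := hx.monotoneOn (mem_Iic.2 hn) (mem_Iic.2 le_rfl) hn
  have hout : ∀ t ∈ Ioc (x 0) (x n) \ Icc (x 0) (x 1), biorthFn x n 0 t = 0 := fun t ht =>
    biorthFn_zero_of_le (not_le.1 fun h => ht.2 ⟨ht.1.1.le, h⟩).le
  have hnum : ∫ t in (x 0)..(x n), interpDeriv x n u t * biorthFn x n 0 t
      = ∫ t in (x 0)..(x 1), (u (x 1) - u (x 0)) / (x 1 - x 0)
          * ((2 * (t - x 1) + (t - x 0)) / (x 0 - x 1)) := by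
    refine integral_eq_integral_of_eqOn_Ioo le_rfl h01.le h1n
      (fun t ht => by simp [hout t ht]) fun t ht => ?_
    rw [interpDeriv_eq_of_mem_Ioo hx u hn ht, biorthFn_zero_of_mem_Ico hn (Ioo_subset_Ico_self ht)]
  have hden : ∫ t in (x 0)..(x n), hatFn x n 0 t * biorthFn x n 0 t
      = ∫ t in (x 0)..(x 1), (x 1 - t) / (x 1 - x 0)
          * ((2 * (t - x 1) + (t - x 0)) / (x 0 - x 1)) := by
    refine integral_eq_integral_of_eqOn_Ioo le_rfl h01.le h1n
      (fun t ht => by simp [hout t ht]) fun t ht => ?_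
    rw [hatFn_zero_of_mem_Icc hn (Ioo_subset_Icc_self ht),
      biorthFn_zero_of_mem_Ico hn (Ioo_subset_Ico_self ht)]
  rw [recGrad, hnum, hden, intervalIntegral.integral_const_mul, integral_biorth_left h01.ne,
    integral_hat_mul_biorth_left h01.ne]
  field_simp

theorem recGrad_succ_self (hx : StrictMonoOn x (Iic (m + 1))) (u : ℝ → ℝ) :
    recGrad x (m + 1) u (m + 1) = (u (x (m + 1)) - u (x m)) / (x (m + 1) - x m) := by
  have hm : x m < x (m + 1) := hx (mem_Iic.2 m.le_succ) (mem_Iic.2 le_rfl) m.lt_succ_self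
  have h0m : x 0 ≤ x m :=
    hx.monotoneOn (mem_Iic.2 (m + 1).zero_le) (mem_Iic.2 m.le_succ) m.zero_le
  have hout : ∀ t ∈ Ioc (x 0) (x (m + 1)) \ Icc (x m) (x (m + 1)),
      biorthFn x (m + 1) (m + 1) t = 0 := fun t ht =>
    biorthFn_succ_self_of_lt (not_le.1 fun h => ht.2 ⟨h, ht.1.2⟩)
  have hnum : ∫ t in (x 0)..(x (m + 1)), interpDeriv x (m + 1) u t * biorthFn x (m + 1) (m + 1) t
      = ∫ t in (x m)..(x (m + 1)), (u (x (m + 1)) - u (x m)) / (x (m + 1) - x m)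
          * ((2 * (t - x m) + (t - x (m + 1))) / (x (m + 1) - x m)) := by
    refine integral_eq_integral_of_eqOn_Ioo h0m hm.le le_rfl
      (fun t ht => by simp [hout t ht]) fun t ht => ?_
    rw [interpDeriv_eq_of_mem_Ioo hx u m.lt_succ_self ht,
      biorthFn_succ_self_of_mem_Ico (Ioo_subset_Ico_self ht)]
  have hden : ∫ t in (x 0)..(x (m + 1)), hatFn x (m + 1) (m + 1) t * biorthFn x (m + 1) (m + 1) t
      = ∫ t in (x m)..(x (m + 1)), (t - x m) / (x (m + 1) - x m)
          * ((2 * (t - x m) + (t - x (m + 1))) / (x (m + 1) - x m)) := by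
    refine integral_eq_integral_of_eqOn_Ioo h0m hm.le le_rfl
      (fun t ht => by simp [hout t ht]) fun t ht => ?_
    rw [hatFn_succ_self_of_mem_Icc (Ioo_subset_Icc_self ht),
      biorthFn_succ_self_of_mem_Ico (Ioo_subset_Ico_self ht)]
  rw [recGrad, hnum, hden, intervalIntegral.integral_const_mul, integral_biorth_right hm.ne,
    integral_hat_mul_biorth_right hm.ne]
  field_simp

end Partition

/-- Theorem 1, boundary case: for any `u : ℝ → ℝ`,
`g_0 = (u(x_1) - u(x_0)) / (x_1 - x_0)` and `g_n = (u(x_n) - u(x_{n-1})) / (x_n - x_{n-1})`. -/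
theorem recGrad_boundary (n : ℕ) (x : ℕ → ℝ) (hn : 2 ≤ n)
    (hx : ∀ i < n, x i < x (i+1)) (u : ℝ → ℝ) :
    recGrad x n u 0 = (u (x 1) - u (x 0)) / (x 1 - x 0) ∧
    recGrad x n u n = (u (x n) - u (x (n-1))) / (x n - x (n-1)) := by
  have hmono : StrictMonoOn x (Iic n) := strictMonoOn_Iic_of_lt_succ hx
  obtain ⟨m, rfl⟩ : ∃ m, n = m + 1 := ⟨n - 1, by omega⟩
  exact ⟨recGrad_zero m.succ_pos hmono u, by simpa using recGrad_succ_self hmono u⟩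
end

section
/- (Corollary, nodal error for quadratics on a general grid) Let u(x) = a x² + b x + c with a, b, c ∈ ℝ. Then for every interior index 1 ≤ i ≤ n−1, g_i − u'(x_i) = a (x_{i−1} + x_{i+1} − 2 x_i); moreover g_0 − u'(x_0) = a (x_1 − x_0) and g_n − u'(x_n) = a (x_{n−1} − x_n). -/
open intervalIntegral

/-! On each cell, `u_h'` is the difference quotient of `u`, while `λ_i` is affine and vanishes
except on the two cells adjacent to `x_i`, where `∫ λ_i = ∫ φ_i λ_i = h/2` (`h` the cell length).
So the numerator of `g_i` telescopes to `(u(x_{i+1}) - u(x_{i-1}))/2` and the denominator to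
`(x_{i+1} - x_{i-1})/2`: `g_i` is the slope of `u` across the patch of `x_i` (one-sided at the
ends of the grid). For a quadratic that slope is `a (x_{i-1} + x_{i+1}) + b`. -/

open Set Finset

theorem integral_eq_sum_integral_cells {x : ℕ → ℝ} {n : ℕ} (hx : ∀ k < n, x k ≤ x (k + 1))
    {f : ℝ → ℝ} {g : ℕ → ℝ → ℝ} (hg : ∀ j < n, Continuous (g j))
    (hfg : ∀ j < n, EqOn f (g j) (Ioo (x j) (x (j + 1)))) :
    ∫ t in x 0..x n, f t = ∑ j ∈ range n, ∫ t in x j..x (j + 1), g j t := by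
  have hint : ∀ j < n, IntervalIntegrable f MeasureTheory.volume (x j) (x (j + 1)) := fun j hj =>
    ((hg j hj).intervalIntegrable _ _).congr_uIoo (uIoo_of_le (hx j hj) ▸ (hfg j hj).symm)
  rw [← sum_integral_adjacent_intervals hint]
  exact sum_congr rfl fun j hj =>
    integral_congr_Ioo_of_le (hx j (mem_range.1 hj)) (hfg j (mem_range.1 hj))

/- `hatPiece p q` and `biorthPiece p q` are the restrictions of `φ_i` and `λ_i` to a cell with
endpoints `p` and `q = x_i`; `hatCell x i j` and `biorthCell x i j` are those on `(x_j, x_{j+1})`. -/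

noncomputable def hatPiece (p q t : ℝ) : ℝ := (t - p) / (q - p)

noncomputable def biorthPiece (p q t : ℝ) : ℝ := (2 * (t - p) + (t - q)) / (q - p)

noncomputable def hatCell (x : ℕ → ℝ) (i j : ℕ) : ℝ → ℝ :=
  if j + 1 = i then hatPiece (x j) (x (j + 1)) else if j = i then hatPiece (x (j + 1)) (x j) else 0

noncomputable def biorthCell (x : ℕ → ℝ) (i j : ℕ) : ℝ → ℝ :=
  if j + 1 = i then biorthPiece (x j) (x (j + 1))
  else if j = i then biorthPiece (x (j + 1)) (x j) else 0

theorem integral_biorthPiece (p q : ℝ) : ∫ t in p..q, biorthPiece p q t = (q - p) / 2 := by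
  have hF : ∀ t, HasDerivAt (fun t => (3 / 2 * (t - p) ^ 2 - (q - p) * (t - p)) / (q - p))
      (biorthPiece p q t) t := fun t => by
    have hs := (hasDerivAt_id' t).sub_const p
    refine ((((hs.fun_pow 2).const_mul (3 / 2)).sub (hs.const_mul (q - p))).div_const
      (q - p)).congr_deriv ?_
    rw [biorthPiece]; push_cast; ring
  rw [integral_eq_sub_of_hasDerivAt (fun t _ => hF t)
    (by apply Continuous.intervalIntegrable; unfold biorthPiece; fun_prop)]
  rcases eq_or_ne p q with rfl | hpq
  · simp
  field_simp [sub_ne_zero.mpr hpq.symm]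
  ring

theorem integral_hatPiece_mul_biorthPiece (p q : ℝ) :
    ∫ t in p..q, hatPiece p q t * biorthPiece p q t = (q - p) / 2 := by
  have hF : ∀ t, HasDerivAt (fun t => ((t - p) ^ 3 - (q - p) / 2 * (t - p) ^ 2) / (q - p) / (q - p))
      (hatPiece p q t * biorthPiece p q t) t := fun t => by
    have hs := (hasDerivAt_id' t).sub_const p
    refine ((((hs.fun_pow 3).sub ((hs.fun_pow 2).const_mul ((q - p) / 2))).div_const
      (q - p)).div_const (q - p)).congr_deriv ?_
    rw [hatPiece, biorthPiece]; push_cast; ring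
  rw [integral_eq_sub_of_hasDerivAt (fun t _ => hF t)
    (by apply Continuous.intervalIntegrable; unfold hatPiece biorthPiece; fun_prop)]
  rcases eq_or_ne p q with rfl | hpq
  · simp
  field_simp [sub_ne_zero.mpr hpq.symm]
  ring

theorem continuous_hatCell (x : ℕ → ℝ) (i j : ℕ) : Continuous (hatCell x i j) := by
  unfold hatCell hatPiece; split_ifs <;> fun_prop

theorem continuous_biorthCell (x : ℕ → ℝ) (i j : ℕ) : Continuous (biorthCell x i j) := by
  unfold biorthCell biorthPiece; split_ifs <;> fun_prop

theorem integral_biorthCell (x : ℕ → ℝ) (i j : ℕ) :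
    ∫ t in x j..x (j + 1), biorthCell x i j t =
      if j + 1 = i ∨ j = i then (x (j + 1) - x j) / 2 else 0 := by
  by_cases hl : j + 1 = i
  · simp [biorthCell, hl, integral_biorthPiece]
  by_cases hr : j = i
  · subst hr
    simp only [biorthCell, hl, if_false, if_true, or_true]
    rw [integral_symm, integral_biorthPiece]
    ring
  · simp [biorthCell, hl, hr]

theorem integral_hatCell_mul_biorthCell (x : ℕ → ℝ) (i j : ℕ) :
    ∫ t in x j..x (j + 1), hatCell x i j t * biorthCell x i j t =
      if j + 1 = i ∨ j = i then (x (j + 1) - x j) / 2 else 0 := by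
  by_cases hl : j + 1 = i
  · simp [hatCell, biorthCell, hl, integral_hatPiece_mul_biorthPiece]
  by_cases hr : j = i
  · subst hr
    simp only [hatCell, biorthCell, hl, if_false, if_true, or_true]
    rw [integral_symm, integral_hatPiece_mul_biorthPiece]
    ring
  · simp [hatCell, biorthCell, hl, hr]

section Grid

variable {x : ℕ → ℝ} {n : ℕ}

theorem strictMonoOn_grid (hx : ∀ k < n, x k < x (k + 1)) : StrictMonoOn x (Set.Iic n) :=
  strictMonoOn_Iic_of_lt_succ fun m hm => by rw [Order.succ_eq_add_one]; exact hx m hm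

theorem cell_index_eq (hx : ∀ k < n, x k < x (k + 1)) {j k : ℕ} (hj : j < n) (hk : k < n)
    {t : ℝ} (ht : t ∈ Ioo (x j) (x (j + 1))) (hkt : x k ≤ t) (htk : t ≤ x (k + 1)) : k = j := by
  have hmono := strictMonoOn_grid hx
  have hkj : k < j + 1 :=
    (hmono.lt_iff_lt (mem_Iic.2 hk.le) (mem_Iic.2 hj)).1 (hkt.trans_lt ht.2)
  have hjk : j < k + 1 :=
    (hmono.lt_iff_lt (mem_Iic.2 hj.le) (mem_Iic.2 hk)).1 (ht.1.trans_le htk)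
  omega

variable {i j : ℕ}

theorem hatFn_eqOn_cell (hx : ∀ k < n, x k < x (k + 1)) (hi : i ≤ n) (hj : j < n) :
    EqOn (hatFn x n i) (hatCell x i j) (Ioo (x j) (x (j + 1))) := by
  intro t ht
  have hleft : (0 < i ∧ x (i - 1) ≤ t ∧ t ≤ x i) ↔ j + 1 = i := by
    constructor
    · rintro ⟨hi0, h1, h2⟩
      have := cell_index_eq hx hj (by omega) ht h1 (by rwa [Nat.sub_add_cancel hi0])
      omega
    · rintro rfl
      simpa using ⟨ht.1.le, ht.2.le⟩
  have hright : (i < n ∧ x i ≤ t ∧ t ≤ x (i + 1)) ↔ j = i := by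
    constructor
    · rintro ⟨hin, h1, h2⟩
      exact (cell_index_eq hx hj hin ht h1 h2).symm
    · rintro rfl
      exact ⟨hj, ht.1.le, ht.2.le⟩
  simp only [hatFn, hatCell, hleft, hright]
  split_ifs with h1 h2
  · subst h1; simp [hatPiece]
  · subst h2; rw [hatPiece, ← neg_sub t, ← neg_sub (x j), neg_div_neg_eq]
  · rfl

theorem biorthFn_eqOn_cell (hx : ∀ k < n, x k < x (k + 1)) (hi : i ≤ n) (hj : j < n) :
    EqOn (biorthFn x n i) (biorthCell x i j) (Ioo (x j) (x (j + 1))) := by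
  intro t ht
  have hleft : (0 < i ∧ x (i - 1) ≤ t ∧ t < x i) ↔ j + 1 = i := by
    constructor
    · rintro ⟨hi0, h1, h2⟩
      have := cell_index_eq hx hj (by omega) ht h1 (by rw [Nat.sub_add_cancel hi0]; exact h2.le)
      omega
    · rintro rfl
      simpa using ⟨ht.1.le, ht.2⟩
  have hright : (i < n ∧ x i ≤ t ∧ t < x (i + 1)) ↔ j = i := by
    constructor
    · rintro ⟨hin, h1, h2⟩
      exact (cell_index_eq hx hj hin ht h1 h2.le).symm
    · rintro rfl
      exact ⟨hj, ht.1.le, ht.2⟩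
  simp only [biorthFn, biorthCell, hleft, hright]
  split_ifs with h1 h2
  · subst h1; simp [biorthPiece]
  · subst h2; rfl
  · rfl

theorem interpDeriv_eqOn_cell (hx : ∀ k < n, x k < x (k + 1)) (hj : j < n) (u : ℝ → ℝ) :
    EqOn (interpDeriv x n u) (fun _ => slope u (x j) (x (j + 1))) (Ioo (x j) (x (j + 1))) := by
  intro t ht
  rw [interpDeriv, sum_eq_single_of_mem j (mem_range.2 hj), if_pos (And.intro ht.1 ht.2),
    slope_def_field]
  intro k hk hkj
  rw [if_neg]
  exact fun htk => hkj (cell_index_eq hx hj (mem_range.1 hk) ht htk.1.le htk.2.le)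

end Grid

theorem sum_adjacent_cells_sub (F : ℕ → ℝ) {n i : ℕ} (hi : i ≤ n) :
    ∑ j ∈ range n, (if j + 1 = i ∨ j = i then (F (j + 1) - F j) / 2 else 0) =
      (F (min (i + 1) n) - F (i - 1)) / 2 := by
  have hcells : {j ∈ range n | j + 1 = i ∨ j = i} = Finset.Ico (i - 1) (min (i + 1) n) := by
    ext j; simp only [mem_filter, Finset.mem_range, Finset.mem_Ico]; omega
  rw [← sum_filter, ← sum_div, hcells, sum_Ico_sub F (by omega)]

/-- At the ends of the grid, truncated subtraction and `min` make the slope one-sided: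
`x (0 - 1) = x 0` and `x (min (n + 1) n) = x n`. -/
theorem recGrad_eq_slope {x : ℕ → ℝ} {n i : ℕ} (hx : ∀ k < n, x k < x (k + 1)) (hi : i ≤ n)
    (u : ℝ → ℝ) : recGrad x n u i = slope u (x (i - 1)) (x (min (i + 1) n)) := by
  have hx' : ∀ k < n, x k ≤ x (k + 1) := fun k hk => (hx k hk).le
  have hnum : ∫ t in x 0..x n, interpDeriv x n u t * biorthFn x n i t =
      (u (x (min (i + 1) n)) - u (x (i - 1))) / 2 := by
    have hslope : ∀ p q, slope u p q * ((q - p) / 2) = (u q - u p) / 2 := fun p q => by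
      rw [mul_div_assoc', mul_comm, ← smul_eq_mul, sub_smul_slope, vsub_eq_sub]
    rw [integral_eq_sum_integral_cells hx' (fun j _ => (continuous_biorthCell x i j).const_mul _)
      fun j hj => (interpDeriv_eqOn_cell hx hj u).comp_left₂ (biorthFn_eqOn_cell hx hi hj)]
    simp_rw [intervalIntegral.integral_const_mul, integral_biorthCell, mul_ite, mul_zero, hslope]
    exact sum_adjacent_cells_sub (fun k => u (x k)) hi
  have hden : ∫ t in x 0..x n, hatFn x n i t * biorthFn x n i t =
      (x (min (i + 1) n) - x (i - 1)) / 2 := by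
    rw [integral_eq_sum_integral_cells hx' (g := fun j t => hatCell x i j t * biorthCell x i j t)
      (fun j _ => (continuous_hatCell x i j).mul (continuous_biorthCell x i j))
      fun j hj => (hatFn_eqOn_cell hx hi hj).comp_left₂ (biorthFn_eqOn_cell hx hi hj)]
    simp_rw [integral_hatCell_mul_biorthCell]
    exact sum_adjacent_cells_sub x hi
  rw [recGrad, hnum, hden, div_div_div_cancel_right₀ two_ne_zero, slope_def_field]

theorem slope_quadratic (a b c : ℝ) {p q : ℝ} (hpq : p ≠ q) :
    slope (fun t => a * t ^ 2 + b * t + c) p q = a * (p + q) + b := by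
  rw [slope_def_field, div_eq_iff (sub_ne_zero.2 hpq.symm)]
  ring

/-- nodal error for quadratics on a general grid: for
`u(x) = a x² + b x + c` (so `u'(t) = 2 a t + b`), for every interior index `1 ≤ i ≤ n-1`
`g_i - u'(x_i) = a (x_{i-1} + x_{i+1} - 2 x_i)`, and
`g_0 - u'(x_0) = a (x_1 - x_0)`, `g_n - u'(x_n) = a (x_{n-1} - x_n)`. -/
theorem recGrad_quadratic_nodal_error (n : ℕ) (x : ℕ → ℝ) (hn : 2 ≤ n)
    (hx : ∀ i < n, x i < x (i+1)) (a b c : ℝ) :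
    (∀ i : ℕ, 1 ≤ i → i < n →
      recGrad x n (fun t => a * t^2 + b * t + c) i - (2 * a * x i + b)
        = a * (x (i-1) + x (i+1) - 2 * x i)) ∧
    recGrad x n (fun t => a * t^2 + b * t + c) 0 - (2 * a * x 0 + b) = a * (x 1 - x 0) ∧
    recGrad x n (fun t => a * t^2 + b * t + c) n - (2 * a * x n + b)
      = a * (x (n-1) - x n) := by
  have hlt : ∀ k l, k < l → l ≤ n → x k < x l := fun k l hkl hl =>
    strictMonoOn_grid hx (mem_Iic.2 (by omega)) (mem_Iic.2 hl) hkl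
  refine ⟨fun i hi hin => ?_, ?_, ?_⟩
  · rw [recGrad_eq_slope hx hin.le, min_eq_left hin,
      slope_quadratic a b c (hlt (i - 1) (i + 1) (by omega) hin).ne]
    ring
  · rw [recGrad_eq_slope hx n.zero_le, min_eq_left (by omega : 0 + 1 ≤ n), Nat.zero_sub,
      slope_quadratic a b c (hlt 0 1 one_pos (by omega)).ne]
    ring
  · rw [recGrad_eq_slope hx le_rfl, min_eq_right n.le_succ,
      slope_quadratic a b c (hlt (n - 1) n (by omega) le_rfl).ne]
    ring
end
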